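/- arXiv:0904.0811 — 3 statements merged into one kernel-verified Lean document; each statement's English description precedes it below -/
import Mathlib

section
/- The set of relative weights of degree-2 polynomials over 𝔽_2 (over all numbers of variables) is infinite. -/
/-!
Count nonzeros with the character `a ↦ (-1)^a` of `ZMod 2`: if `f` has `N` nonzeros on `𝔽₂^m`,
then `2N = 2^m - ∑ₓ (-1)^{f x}`. For `f = x₀x₁ + x₂x₃ + ⋯ + x_{2k-2}x_{2k-1}` the character sum
factors over the `k` disjoint pairs of variables, each pair contributing `∑_{a,b} (-1)^{ab} = 2`,
so `2N = 4^k - 2^k` and the relative weight is `1/2 - 1/2^(k+1)`, different for every `k`.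
-/

open Finset MvPolynomial

def paritySign : AddChar (ZMod 2) ℤ where
  toFun a := if a = 0 then 1 else -1
  map_zero_eq_one' := rfl
  map_add_eq_mul' := by decide

theorem AddChar.map_sum_eq_prod {ι A M : Type*} [AddCommMonoid A] [CommMonoid M]
    (ψ : AddChar A M) (s : Finset ι) (f : ι → A) :
    ψ (∑ i ∈ s, f i) = ∏ i ∈ s, ψ (f i) :=
  map_prod ψ.toMonoidHom (fun i => Multiplicative.ofAdd (f i)) s

theorem two_mul_card_filter_ne_zero {α : Type*} [Fintype α] (f : α → ZMod 2) :
    2 * (#{x | f x ≠ 0} : ℤ) = Fintype.card α - ∑ x, paritySign (f x) := by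
  have (a : ZMod 2) : paritySign a = 1 - 2 * if a ≠ 0 then 1 else 0 := by revert a; decide
  simp only [this, sum_sub_distrib, ← mul_sum, sum_boole, sum_const, card_univ]
  simp

theorem sum_paritySign_sum_eq_pow {β : Type*} [Fintype β] (g : β → ZMod 2) (k : ℕ) :
    ∑ y : Fin k → β, paritySign (∑ i, g (y i)) = (∑ b, paritySign (g b)) ^ k := by
  simp only [AddChar.map_sum_eq_prod, Fintype.sum_pow]

theorem sum_paritySign_mul : ∑ v : Fin 2 → ZMod 2, paritySign (v 0 * v 1) = 2 := by decide

-- `finProdFinEquiv (i, j) = 2 * i + j`, so this is `x₀x₁ + x₂x₃ + ⋯`.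
noncomputable def hyperbolicForm (k : ℕ) : MvPolynomial (Fin (k * 2)) (ZMod 2) :=
  ∑ i : Fin k, X (finProdFinEquiv (i, 0)) * X (finProdFinEquiv (i, 1))

theorem totalDegree_hyperbolicForm_le (k : ℕ) : (hyperbolicForm k).totalDegree ≤ 2 := by
  refine (totalDegree_finsetSum _ _).trans (Finset.sup_le fun i _ => ?_)
  refine (totalDegree_mul _ _).trans ?_
  simp [totalDegree_X]

theorem sum_paritySign_eval_hyperbolicForm (k : ℕ) :
    ∑ x, paritySign (eval x (hyperbolicForm k)) = 2 ^ k := by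
  let e : (Fin k → Fin 2 → ZMod 2) ≃ (Fin (k * 2) → ZMod 2) :=
    (Equiv.curry _ _ _).symm.trans (finProdFinEquiv.arrowCongr (Equiv.refl _))
  rw [← e.sum_comp, ← sum_paritySign_mul, ← sum_paritySign_sum_eq_pow]
  simp [hyperbolicForm, e]

theorem card_filter_eval_hyperbolicForm_ne_zero_div (k : ℕ) :
    (#{x | eval x (hyperbolicForm k) ≠ 0} : ℝ) / 2 ^ (k * 2) = 1 / 2 - 1 / 2 ^ (k + 1) := by
  have h := two_mul_card_filter_ne_zero fun x => eval x (hyperbolicForm k)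
  rw [sum_paritySign_eval_hyperbolicForm, Fintype.card_fun, ZMod.card, Fintype.card_fin] at h
  have h' : 2 * (#{x | eval x (hyperbolicForm k) ≠ 0} : ℝ) = 2 ^ (k * 2) - 2 ^ k := by
    exact_mod_cast h
  rw [pow_succ, pow_mul]
  field_simp
  linear_combination h'

/-- `W₂(2)`, the set of relative weights of degree-≤2 polynomials over `𝔽₂`
(over all numbers of variables), is infinite. -/
theorem stmt2 :
    Set.Infinite {w : ℝ | ∃ (m : ℕ) (f : MvPolynomial (Fin m) (ZMod 2)),
      f.totalDegree ≤ 2 ∧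
      w = ((Finset.univ.filter
        (fun x : Fin m → ZMod 2 => MvPolynomial.eval x f ≠ 0)).card : ℝ) / (2 : ℝ) ^ m} := by
  have hinj : Function.Injective fun k : ℕ => (1 / 2 - 1 / 2 ^ (k + 1) : ℝ) :=
    fun a b hab => by simpa using hab
  refine Set.infinite_of_injective_forall_mem hinj fun k => ?_
  exact ⟨k * 2, hyperbolicForm k, totalDegree_hyperbolicForm_le k,
    (card_filter_eval_hyperbolicForm_ne_zero_div k).symm⟩
end

section
/- If a distribution D on 𝔽_p^c satisfies: for every nonzero a = (a_1,…,a_c) ∈ 𝔽_p^c, the distribution of a_1 y_1 + ⋯ + a_c y_c (where y ∼ D) is within statistical distance p^{-c}·ε of the uniform distribution on 𝔽_p, then D itself is within statistical distance ε of the uniform distribution on 𝔽_p^c. -/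
/-!
Let `f = D - p^{-c}`, so that `∑ f = 0`, and write `a_* f` for the pushforward of `f` along
`y ↦ a ⬝ᵥ y`. All `p^c` vectors `a` satisfy `a ⬝ᵥ y = a ⬝ᵥ y'` when `y = y'`, but only `p^{c-1}`
of them when `y ≠ y'`; expanding the squares therefore gives the Parseval-type identity
`p ∑_a ‖a_* f‖₂² = p^c (∑ f)² + (p - 1) p^c ‖f‖₂²`, in which the term `a = 0` is `(∑ f)² = 0`.
For `a ≠ 0` the hypothesis gives `‖a_* f‖₂ ≤ ‖a_* f‖₁ ≤ 2ε / p^c`, which bounds `‖f‖₂`, and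
Cauchy–Schwarz `‖f‖₁² ≤ p^c ‖f‖₂²` turns this into `‖f‖₁ ≤ 2ε`.
-/

open Finset Matrix

section Pushforward

variable {α β : Type*} [Fintype α] [DecidableEq β]

noncomputable def pushforward (φ : α → β) (f : α → ℝ) (b : β) : ℝ :=
  ∑ x with φ x = b, f x

theorem pushforward_sub_const (φ : α → β) (f : α → ℝ) (k : ℝ) (b : β) :
    pushforward φ (fun x => f x - k) b = pushforward φ f b - #{x | φ x = b} * k := by
  simp only [pushforward, sum_sub_distrib, sum_const, nsmul_eq_mul]

variable [Fintype β]

theorem sum_pushforward_sq (φ : α → β) (f : α → ℝ) :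
    ∑ b, pushforward φ f b ^ 2 = ∑ x, f x * pushforward φ f (φ x) := by
  rw [← sum_fiberwise univ φ]
  refine sum_congr rfl fun b _ => ?_
  rw [sq, pushforward, sum_mul]
  refine sum_congr rfl fun x hx => ?_
  rw [(mem_filter.1 hx).2, pushforward]

theorem sum_pushforward_const_sq (b : β) (f : α → ℝ) :
    ∑ b', pushforward (fun _ => b) f b' ^ 2 = (∑ x, f x) ^ 2 := by
  rw [sum_pushforward_sq, sq, sum_mul]
  simp [pushforward]

end Pushforward

section DotProduct

variable {F ι : Type*} [Field F] [Fintype F] [DecidableEq F] [Fintype ι] [DecidableEq ι]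

theorem card_filter_dotProduct_eq_mul_card {a : ι → F} (ha : a ≠ 0) (t : F) :
    #{y | a ⬝ᵥ y = t} * Fintype.card F = Fintype.card (ι → F) := by
  obtain ⟨i, hi⟩ := Function.ne_iff.1 ha
  let ℓ : (ι → F) →+ F := AddMonoidHom.mk' (a ⬝ᵥ ·) (dotProduct_add a)
  have hsurj (s : F) : s ∈ Set.range ℓ :=
    ⟨Pi.single i (s / a i), by simp [ℓ, dotProduct_single, mul_div_cancel₀ _ hi]⟩
  calc #{y | a ⬝ᵥ y = t} * Fintype.card F = ∑ _s : F, #{y | ℓ y = t} := by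
        rw [sum_const, card_univ, smul_eq_mul, mul_comm]; rfl
    _ = ∑ s : F, #{y | ℓ y = s} :=
        sum_congr rfl fun s _ => AddMonoidHom.card_fiber_eq_of_mem_range ℓ (hsurj t) (hsurj s)
    _ = Fintype.card (ι → F) := (card_eq_sum_card_fiberwise fun y _ => mem_univ (ℓ y)).symm

theorem card_mul_card_filter_dotProduct_eq (y y' : ι → F) :
    (Fintype.card F * #{a | a ⬝ᵥ y = a ⬝ᵥ y'} : ℝ) = Fintype.card (ι → F) +
      if y = y' then ((Fintype.card F : ℝ) - 1) * Fintype.card (ι → F) else 0 := by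
  by_cases h : y = y'
  · simp [h]
    ring
  · have hfilter : #{a | a ⬝ᵥ y = a ⬝ᵥ y'} = #{a | (y - y') ⬝ᵥ a = 0} := by
      congr 1; ext a
      simp [dotProduct_comm, sub_eq_zero]
    rw [if_neg h, add_zero, hfilter, mul_comm, ← Nat.cast_mul,
      card_filter_dotProduct_eq_mul_card (sub_ne_zero.2 h)]

theorem pushforward_dotProduct_sub_inv_card {a : ι → F} (ha : a ≠ 0) (f : (ι → F) → ℝ)
    (t : F) :
    pushforward (a ⬝ᵥ ·) (fun y => f y - 1 / Fintype.card (ι → F)) t =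
      pushforward (a ⬝ᵥ ·) f t - 1 / Fintype.card F := by
  rw [pushforward_sub_const, mul_one_div]
  congr 1
  rw [div_eq_div_iff (by positivity) (by positivity), one_mul]
  exact_mod_cast card_filter_dotProduct_eq_mul_card ha t

theorem card_mul_sum_sum_pushforward_dotProduct_sq (f : (ι → F) → ℝ) :
    Fintype.card F * ∑ a, ∑ t, pushforward (a ⬝ᵥ ·) f t ^ 2 =
      Fintype.card (ι → F) * (∑ y, f y) ^ 2 +
        ((Fintype.card F : ℝ) - 1) * Fintype.card (ι → F) * ∑ y, f y ^ 2 := by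
  have hfiber (a : ι → F) : ∑ t, pushforward (a ⬝ᵥ ·) f t ^ 2 =
      ∑ y, ∑ y', if a ⬝ᵥ y = a ⬝ᵥ y' then f y * f y' else 0 := by
    rw [sum_pushforward_sq]
    simp only [pushforward, mul_sum, sum_filter, eq_comm, mul_ite, mul_zero]
  calc _ = ∑ y, ∑ y', f y * f y' * (Fintype.card F * #{a | a ⬝ᵥ y = a ⬝ᵥ y'} : ℝ) := by
        simp only [hfiber, natCast_card_filter, mul_sum, mul_ite, mul_one, mul_zero]
        rw [sum_comm]
        refine sum_congr rfl fun y _ => ?_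
        rw [sum_comm]
        refine sum_congr rfl fun y' _ => sum_congr rfl fun a _ => ?_
        split_ifs <;> ring
    _ = (∑ y, ∑ y', f y * f y') * Fintype.card (ι → F) +
          (∑ y, f y * f y) * (((Fintype.card F : ℝ) - 1) * Fintype.card (ι → F)) := by
        simp only [card_mul_card_filter_dotProduct_eq, mul_add, sum_add_distrib, mul_ite,
          mul_zero, sum_ite_eq, mem_univ, if_true, sum_mul]
    _ = _ := by
        rw [← sum_mul_sum]
        simp only [sq]
        ring

theorem card_sub_one_mul_sum_sq_le {f : (ι → F) → ℝ} (hf : ∑ y, f y = 0) {δ : ℝ}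
    (h : ∀ a ≠ 0, ∑ t, |pushforward (a ⬝ᵥ ·) f t| ≤ δ) :
    ((Fintype.card F : ℝ) - 1) * Fintype.card (ι → F) * ∑ y, f y ^ 2 ≤
      Fintype.card F * ((Fintype.card (ι → F) - 1) * δ ^ 2) := by
  set X : (ι → F) → ℝ := fun a => ∑ t, pushforward (a ⬝ᵥ ·) f t ^ 2
  have hX0 : X 0 = 0 := by
    simp only [X, zero_dotProduct, sum_pushforward_const_sq, hf]
    norm_num
  have hX (a : ι → F) (ha : a ≠ 0) : X a ≤ δ ^ 2 :=
    calc X a = ∑ t, |pushforward (a ⬝ᵥ ·) f t| ^ 2 := by simp only [X, sq_abs]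
      _ ≤ (∑ t, |pushforward (a ⬝ᵥ ·) f t|) ^ 2 :=
        sum_sq_le_sq_sum_of_nonneg fun _ _ => abs_nonneg _
      _ ≤ δ ^ 2 := pow_le_pow_left₀ (sum_nonneg fun _ _ => abs_nonneg _) (h a ha) 2
  have hsumX : ∑ a, X a ≤ (Fintype.card (ι → F) - 1) * δ ^ 2 :=
    calc ∑ a, X a = ∑ a ∈ univ.erase 0, X a := (sum_erase _ hX0).symm
      _ ≤ #(univ.erase 0) • δ ^ 2 :=
        sum_le_card_nsmul _ _ _ fun a ha => hX a (ne_of_mem_erase ha)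
      _ = (Fintype.card (ι → F) - 1) * δ ^ 2 := by
        rw [card_erase_of_mem (mem_univ _), card_univ, nsmul_eq_mul,
          Nat.cast_pred Fintype.card_pos]
  have hParseval := card_mul_sum_sum_pushforward_dotProduct_sq f
  rw [hf] at hParseval
  have hq : (0 : ℝ) ≤ Fintype.card F := Nat.cast_nonneg _
  nlinarith [mul_le_mul_of_nonneg_left hsumX hq]

theorem sum_abs_le_of_sum_abs_pushforward_dotProduct_le {f : (ι → F) → ℝ}
    (hf : ∑ y, f y = 0) {δ : ℝ} (hδ : 0 ≤ δ)
    (h : ∀ a ≠ 0, ∑ t, |pushforward (a ⬝ᵥ ·) f t| ≤ δ) :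
    ∑ y, |f y| ≤ Fintype.card (ι → F) * δ := by
  set q : ℝ := ↑(Fintype.card F)
  set N : ℝ := ↑(Fintype.card (ι → F))
  have hq : 2 ≤ q := Nat.ofNat_le_cast.2 Fintype.one_lt_card
  have hN : 1 ≤ N := Nat.one_le_cast.2 Fintype.card_pos
  have hCS : (∑ y, |f y|) ^ 2 ≤ N * ∑ y, f y ^ 2 := by
    simpa only [sq_abs, card_univ] using
      sq_sum_le_card_mul_sum_sq (s := univ) (f := fun y => |f y|)
  -- `(q - 1) N² - q (N - 1) = (q - 2) N (N - 1) + (N - 1)² + (q - 1)`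
  have hcoeff : q * (N - 1) ≤ (q - 1) * N ^ 2 := by
    nlinarith [mul_nonneg (sub_nonneg.2 hq) (mul_nonneg (sub_nonneg.2 hN) (by linarith : 0 ≤ N))]
  have hsq : (q - 1) * (∑ y, |f y|) ^ 2 ≤ (q - 1) * (N * δ) ^ 2 :=
    calc (q - 1) * (∑ y, |f y|) ^ 2 ≤ (q - 1) * N * ∑ y, f y ^ 2 := by
          rw [mul_assoc]; exact mul_le_mul_of_nonneg_left hCS (by linarith)
      _ ≤ q * ((N - 1) * δ ^ 2) := card_sub_one_mul_sum_sq_le hf h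
      _ ≤ (q - 1) * (N * δ) ^ 2 := by nlinarith [sq_nonneg δ]
  exact (pow_le_pow_iff_left₀ (sum_nonneg fun _ _ => abs_nonneg _) (by positivity)
    two_ne_zero).1 (le_of_mul_le_mul_left hsq (by linarith))

end DotProduct

theorem stmt6_general (p : ℕ) (hp : p.Prime) [NeZero p] (c : ℕ) (ε : ℝ) (hε : 0 < ε)
    (D : (Fin c → ZMod p) → ℝ)
    (hsum : ∑ y, D y = 1)
    (hlin : ∀ a : Fin c → ZMod p, a ≠ 0 →
      (1 / 2) * ∑ t : ZMod p,
        |(∑ y ∈ Finset.univ.filter (fun y : Fin c → ZMod p => ∑ i, a i * y i = t), D y)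
          - 1 / (p : ℝ)| ≤ ε / (p : ℝ) ^ c) :
    (1 / 2) * ∑ y : Fin c → ZMod p, |D y - 1 / (p : ℝ) ^ c| ≤ ε := by
  have := Fact.mk hp
  change ∀ a : Fin c → ZMod p, a ≠ 0 →
    1 / 2 * ∑ t, |pushforward (a ⬝ᵥ ·) D t - 1 / (p : ℝ)| ≤ ε / (p : ℝ) ^ c at hlin
  have hN : (p : ℝ) ^ c = Fintype.card (Fin c → ZMod p) := by simp
  have hq : (p : ℝ) = Fintype.card (ZMod p) := by rw [ZMod.card]
  rw [hN] at hlin ⊢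
  rw [hq] at hlin
  have hNpos : (0 : ℝ) < Fintype.card (Fin c → ZMod p) := Nat.cast_pos.2 Fintype.card_pos
  have hf : ∑ y, (D y - 1 / (Fintype.card (Fin c → ZMod p) : ℝ)) = 0 := by
    rw [sum_sub_distrib, hsum, sum_const, card_univ, nsmul_eq_mul]
    field_simp
    ring
  have hpush (a : Fin c → ZMod p) (ha : a ≠ 0) :
      ∑ t, |pushforward (a ⬝ᵥ ·) (fun y => D y - 1 / (Fintype.card (Fin c → ZMod p) : ℝ)) t|
        ≤ 2 * ε / Fintype.card (Fin c → ZMod p) := by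
    have h := hlin a ha
    simp only [pushforward_dotProduct_sub_inv_card ha]
    rw [mul_div_assoc]
    linarith
  have hL1 := sum_abs_le_of_sum_abs_pushforward_dotProduct_le hf (by positivity) hpush
  rw [mul_div_cancel₀ _ hNpos.ne'] at hL1
  linarith

/-- Vazirani-type XOR lemma over `𝔽_p`: if for every nonzero `a ∈ 𝔽_p^c` the distribution of
`a·y` (`y ∼ D`) is within statistical distance `p^{-c}·ε` of uniform on `𝔽_p`, then `D` is
within statistical distance `ε` of uniform on `𝔽_p^c`. -/
theorem stmt6 (p : ℕ) (hp : p.Prime) [NeZero p] (c : ℕ) (ε : ℝ) (hε : 0 < ε)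
    (D : (Fin c → ZMod p) → ℝ)
    (hpos : ∀ y, 0 ≤ D y) (hsum : ∑ y, D y = 1)
    (hlin : ∀ a : Fin c → ZMod p, a ≠ 0 →
      (1 / 2) * ∑ t : ZMod p,
        |(∑ y ∈ Finset.univ.filter (fun y : Fin c → ZMod p => ∑ i, a i * y i = t), D y)
          - 1 / (p : ℝ)| ≤ ε / (p : ℝ) ^ c) :
    (1 / 2) * ∑ y : Fin c → ZMod p, |D y - 1 / (p : ℝ) ^ c| ≤ ε :=
  stmt6_general p hp c ε hε D hsum hlin
end

section
/- Suppose that for an arbitrary error function E : ℕ → (0,1) there is a constant C (depending on p, r, E) such that every degree-≤r polynomial f over 𝔽_p has, for some c ≤ C, a function g : 𝔽_p^c → 𝔽_p with |rel-wt(f) − rel-wt(g)| < E(c). Then for every α ∈ [0,1] that is not p-rational, there exists ε > 0 such that no degree-≤r polynomial over 𝔽_p (in any number of variables) has relative weight in (α − ε, α + ε). -/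
/-- Relative weight of a function `g : 𝔽_p^c → 𝔽_p`. -/
noncomputable def relWtF (p c : ℕ) [NeZero p] (g : (Fin c → ZMod p) → ZMod p) : ℝ :=
  ((Finset.univ.filter (fun x => g x ≠ 0)).card : ℝ) / (p : ℝ) ^ c

/-- Relative weight of a polynomial `f` over `𝔽_p` in `m` variables. -/
noncomputable def relWtP (p m : ℕ) [NeZero p] (f : MvPolynomial (Fin m) (ZMod p)) : ℝ :=
  ((Finset.univ.filter
    (fun x : Fin m → ZMod p => MvPolynomial.eval x f ≠ 0)).card : ℝ) / (p : ℝ) ^ m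

/-!
Relative weights of functions on `c` inputs lie on the grid `p^{-c} ℤ`. If `α` is not
`p`-rational, it has a positive distance `δ(c)` to each of these grids. Applying the
approximation hypothesis with `E(c) = δ(c)/2` gives a bound `C`; then `ε = min_{c ≤ C} E(c)`
works: a weight within `ε` of `α` would be within `E(c)` of a grid point at level `c ≤ C`,
hence within `δ(c)` of `α`.
-/

noncomputable def distToMultiples (d α : ℝ) : ℝ :=
  d * |α / d - round (α / d)|

section distToMultiples

variable {d α : ℝ}

theorem distToMultiples_le (hd : 0 < d) (n : ℤ) : distToMultiples d α ≤ |α - n * d| := by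
  have h : α - n * d = d * (α / d - n) := by field_simp
  rw [h, abs_mul, abs_of_pos hd]
  exact mul_le_mul_of_nonneg_left (round_le _ n) hd.le

theorem distToMultiples_pos (hd : 0 < d) (h : ∀ n : ℤ, α ≠ n * d) :
    0 < distToMultiples d α := by
  refine mul_pos hd (abs_pos.2 (sub_ne_zero.2 fun heq => h (round (α / d)) ?_))
  rw [← heq, div_mul_cancel₀ _ hd.ne']

theorem distToMultiples_le_abs (hd : 0 < d) : distToMultiples d α ≤ |α| := by
  simpa using distToMultiples_le (α := α) hd 0

end distToMultiples

theorem distToMultiples_inv_pow_pos {q α : ℝ} (hq : 0 < q) (hα : 0 ≤ α)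
    (hirr : ¬∃ ℓ k : ℕ, α = ℓ / q ^ k) (c : ℕ) : 0 < distToMultiples (q ^ c)⁻¹ α := by
  have hstep : 0 < (q ^ c)⁻¹ := inv_pos.2 (pow_pos hq c)
  refine distToMultiples_pos hstep fun n hn => ?_
  have hn0 : 0 ≤ n := by
    have : (0 : ℝ) ≤ n * (q ^ c)⁻¹ := hn ▸ hα
    exact_mod_cast nonneg_of_mul_nonneg_left this hstep
  lift n to ℕ using hn0
  exact hirr ⟨n, c, by rw [hn, div_eq_mul_inv]; rfl⟩

theorem distToMultiples_le_abs_sub_relWtF (p c : ℕ) [NeZero p] (α : ℝ)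
    (g : (Fin c → ZMod p) → ZMod p) :
    distToMultiples ((p : ℝ) ^ c)⁻¹ α ≤ |α - relWtF p c g| := by
  have hp : (0 : ℝ) < (p : ℝ) ^ c := pow_pos (Nat.cast_pos.2 (NeZero.pos p)) c
  simpa [relWtF, div_eq_mul_inv] using
    distToMultiples_le (α := α) (inv_pos.2 hp) (Finset.univ.filter (fun x => g x ≠ 0)).card

theorem stmt8_general (p : ℕ) [NeZero p] (r : ℕ)
    (happrox : ∀ E : ℕ → ℝ, (∀ c, 0 < E c ∧ E c < 1) →
      ∃ C : ℕ, ∀ (m : ℕ) (f : MvPolynomial (Fin m) (ZMod p)), f.totalDegree ≤ r →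
        ∃ c ≤ C, ∃ g : (Fin c → ZMod p) → ZMod p,
          |relWtP p m f - relWtF p c g| < E c) :
    ∀ α ∈ Set.Icc (0 : ℝ) 1, (¬∃ (ℓ k : ℕ), α = (ℓ : ℝ) / (p : ℝ) ^ k) →
      ∃ ε > 0, ∀ (m : ℕ) (f : MvPolynomial (Fin m) (ZMod p)), f.totalDegree ≤ r →
        relWtP p m f ∉ Set.Ioo (α - ε) (α + ε) := by
  intro α hα hirr
  have hp : (0 : ℝ) < p := Nat.cast_pos.2 (NeZero.pos p)
  set δ : ℕ → ℝ := fun c => distToMultiples ((p : ℝ) ^ c)⁻¹ α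
  have hδ_pos : ∀ c, 0 < δ c := distToMultiples_inv_pow_pos hp hα.1 hirr
  have hδ_le_one : ∀ c, δ c ≤ 1 := fun c =>
    (distToMultiples_le_abs (inv_pos.2 (pow_pos hp c))).trans ((abs_of_nonneg hα.1).le.trans hα.2)
  obtain ⟨C, hC⟩ := happrox (fun c => δ c / 2)
    fun c => ⟨half_pos (hδ_pos c), by linarith [hδ_le_one c]⟩
  obtain ⟨c₀, -, hc₀⟩ := (Finset.range (C + 1)).exists_min_image (fun c => δ c / 2) ⟨0, by simp⟩
  refine ⟨δ c₀ / 2, half_pos (hδ_pos c₀), fun m f hf hmem => ?_⟩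
  obtain ⟨c, hcC, g, hg⟩ := hC m f hf
  have hmin := hc₀ c (Finset.mem_range.2 (Nat.lt_succ_of_le hcC))
  have hclose : |α - relWtF p c g| < δ c :=
    calc |α - relWtF p c g| ≤ |α - relWtP p m f| + |relWtP p m f - relWtF p c g| :=
          abs_sub_le _ _ _
      _ < δ c₀ / 2 + δ c / 2 :=
          add_lt_add (abs_sub_lt_iff.2 ⟨by linarith [hmem.1], by linarith [hmem.2]⟩) hg
      _ ≤ δ c := by linarith
  exact hclose.not_ge (distToMultiples_le_abs_sub_relWtF p c α g)

/-- If for every error function `E : ℕ → (0,1)` there is a constant `C` such that every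
degree-`≤ r` polynomial `f` over `𝔽_p` is approximated, for some `c ≤ C`, by a function
`g : 𝔽_p^c → 𝔽_p` with `|rel-wt(f) − rel-wt(g)| < E(c)`, then around every
non-`p`-rational `α ∈ [0,1]` there is an interval containing no relative weight of a
degree-`≤ r` polynomial. -/
theorem stmt8 (p : ℕ) (hp : p.Prime) [NeZero p] (r : ℕ)
    (happrox : ∀ E : ℕ → ℝ, (∀ c, 0 < E c ∧ E c < 1) →
      ∃ C : ℕ, ∀ (m : ℕ) (f : MvPolynomial (Fin m) (ZMod p)), f.totalDegree ≤ r →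
        ∃ c ≤ C, ∃ g : (Fin c → ZMod p) → ZMod p,
          |relWtP p m f - relWtF p c g| < E c) :
    ∀ α ∈ Set.Icc (0 : ℝ) 1, (¬∃ (ℓ k : ℕ), α = (ℓ : ℝ) / (p : ℝ) ^ k) →
      ∃ ε > 0, ∀ (m : ℕ) (f : MvPolynomial (Fin m) (ZMod p)), f.totalDegree ≤ r →
        relWtP p m f ∉ Set.Ioo (α - ε) (α + ε) :=
  stmt8_general p r happrox
end
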